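/- (Normal form with compatible symmetry) Let A be a 2×2 matrix of Laurent polynomials over ℂ with compatible symmetry. Then there exist strongly invertible 2×2 matrices P and Q of Laurent polynomials, each with compatible symmetry, such that P(z)A(z)Q(z) = diag(e₁(z), e₂(z)) for some Laurent polynomials e₁, e₂ having symmetry. Moreover, if det A is not identically zero and A = E·diag(d₁,d₂)·F for some strongly invertible 2×2 matrices E, F of Laurent polynomials and Laurent polynomials d₁, d₂ with d₁ dividing d₂ in ℂ[z,z^{−1}], then for every z₀ ∈ ℂ∖{0} the unordered pair {mz(e₁,z₀), mz(e₂,z₀)} equals the unordered pair {mz(d₁,z₀), mz(d₂,z₀)}. -/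

import Mathlib

open LaurentPolynomial Matrix
open scoped Classical

noncomputable section

abbrev LP := LaurentPolynomial ℂ

namespace QT

/-- The coefficient of `z^k` in a Laurent polynomial. -/
def coeff (u : LP) (k : ℤ) : ℂ := (show ℤ →₀ ℂ from AddMonoidAlgebra.coeff u) k

/-- The Hermitian conjugate `u⋆(z) = Σ conj(u(k)) z^{-k}`. -/
def hstar (u : LP) : LP :=
  AddMonoidAlgebra.ofCoeff (show ℤ →₀ ℂ from
    Finsupp.mapDomain (fun k => -k)
      (Finsupp.mapRange (starRingEnd ℂ) (map_zero _) (show ℤ →₀ ℂ from AddMonoidAlgebra.coeff u)))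

/-- `u` has symmetry with type `ε z^c`, i.e. `u(k) = ε u(c-k)` for all `k`. -/
def SymT (u : LP) (ε : ℂ) (c : ℤ) : Prop := ∀ k : ℤ, coeff u k = ε * coeff u (c - k)

def Sgn (ε : ℂ) : Prop := ε = 1 ∨ ε = -1

/-- `u` has symmetry (with some type). -/
def HasSym (u : LP) : Prop := ∃ ε c, Sgn ε ∧ SymT u ε c

/-- The Laurent polynomial `z - a`. -/
def zsub (a : ℂ) : LP := T 1 - LaurentPolynomial.C a

/-- `m` is the multiplicity of `z₀` as a zero of `u`. -/
def mzIs (u : LP) (z₀ : ℂ) (m : ℕ) : Prop := zsub z₀ ^ m ∣ u ∧ ¬ zsub z₀ ^ (m + 1) ∣ u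

/-- The multiplicity of `z₀` as a zero of `u`, as a function. -/
def mzF (u : LP) (z₀ : ℂ) : ℕ := sSup {m : ℕ | zsub z₀ ^ m ∣ u}

/-- The difference-of-(Hermitian)-squares property with respect to symmetry type `ε z^c`. -/
def DOS (u : LP) (ε : ℂ) (c : ℤ) : Prop :=
  ∃ (u₁ u₂ : LP) (ε₁ ε₂ : ℂ) (c₁ c₂ : ℤ),
    Sgn ε₁ ∧ Sgn ε₂ ∧ SymT u₁ ε₁ c₁ ∧ SymT u₂ ε₂ c₂ ∧
    u₁ * hstar u₁ - u₂ * hstar u₂ = u ∧ ε₁ * ε₂ = ε ∧ c₁ - c₂ = c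

/-- Degree: the largest exponent with nonzero coefficient (0 for the zero polynomial). -/
def degL (u : LP) : ℤ :=
  if h : u = 0 then 0
  else (show ℤ →₀ ℂ from AddMonoidAlgebra.coeff u).support.max'
    (Finsupp.support_nonempty_iff.mpr (fun h' => h (congrArg AddMonoidAlgebra.ofCoeff h')))

/-- Lower degree: the smallest exponent with nonzero coefficient (0 for zero). -/
def ldegL (u : LP) : ℤ :=
  if h : u = 0 then 0
  else (show ℤ →₀ ℂ from AddMonoidAlgebra.coeff u).support.min'
    (Finsupp.support_nonempty_iff.mpr (fun h' => h (congrArg AddMonoidAlgebra.ofCoeff h')))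

/-- Length `deg - ldeg`, with `len 0 = ⊥`. -/
def lenL (u : LP) : WithBot ℤ := if u = 0 then ⊥ else ((degL u - ldegL u : ℤ) : WithBot ℤ)

/-- `g` is a greatest common divisor of `a` and `b`. -/
def IsGCD2 (g a b : LP) : Prop := g ∣ a ∧ g ∣ b ∧ ∀ e : LP, e ∣ a → e ∣ b → e ∣ g

/-- `g` is a greatest common divisor of `a`, `b`, `c`, `d`. -/
def IsGCD4 (g a b c d : LP) : Prop :=
  g ∣ a ∧ g ∣ b ∧ g ∣ c ∧ g ∣ d ∧ ∀ e : LP, e ∣ a → e ∣ b → e ∣ c → e ∣ d → e ∣ g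

/-- The Hermitian conjugate transpose of a matrix of Laurent polynomials. -/
def hstarM (A : Matrix (Fin 2) (Fin 2) LP) : Matrix (Fin 2) (Fin 2) LP :=
  fun i j => hstar (A j i)

def IsHerm (A : Matrix (Fin 2) (Fin 2) LP) : Prop := hstarM A = A

/-- `diag(1, -1)`. -/
def Jmat : Matrix (Fin 2) (Fin 2) LP := Matrix.diagonal ![1, -1]

/-- A square matrix of Laurent polynomials is strongly invertible if its determinant is a
nonzero monomial. -/
def StrongInv (A : Matrix (Fin 2) (Fin 2) LP) : Prop :=
  ∃ (lam : ℂ) (k : ℤ), lam ≠ 0 ∧ A.det = LaurentPolynomial.C lam * T k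

/-- Compatible symmetry for a `2×2` matrix of Laurent polynomials. -/
def CompatSym (A : Matrix (Fin 2) (Fin 2) LP) : Prop :=
  ∃ (ε ε' : Fin 2 → ℂ) (c c' : Fin 2 → ℤ),
    (∀ j, Sgn (ε j)) ∧ (∀ k, Sgn (ε' k)) ∧
    ∀ j k, SymT (A j k) (ε j * ε' k) (c' k - c j)

/-- Substitution `z ↦ z²`. -/
def sqDom (u : LP) : LP :=
  AddMonoidAlgebra.ofCoeff (show ℤ →₀ ℂ from
    Finsupp.mapDomain (fun k => 2 * k) (show ℤ →₀ ℂ from AddMonoidAlgebra.coeff u))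

/-- Substitution `z ↦ -z`. -/
def negSub (u : LP) : LP :=
  (show ℤ →₀ ℂ from AddMonoidAlgebra.coeff u).sum fun k c =>
    show LP from AddMonoidAlgebra.ofCoeff (Finsupp.single k ((-1 : ℂ) ^ k * c))

/-- The `γ`-coset `u^{[γ]}(z) = Σ_k u(γ + 2k) z^k`. -/
def cosetL (u : LP) (γ : ℤ) : LP :=
  AddMonoidAlgebra.ofCoeff (show ℤ →₀ ℂ from
    Finsupp.comapDomain (fun k : ℤ => γ + 2 * k) (show ℤ →₀ ℂ from AddMonoidAlgebra.coeff u)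
      (by intro a _ b _ h; simp only at h; omega))

/-- Evaluation of a Laurent polynomial at a point. -/
def evalL (u : LP) (z : ℂ) : ℂ := (show ℤ →₀ ℂ from AddMonoidAlgebra.coeff u).sum fun k c => c * z ^ k

/-- `{a; b₁, b₂}_{Θ,(1,-1)}` is a quasi-tight framelet filter bank. -/
def QTFB (a Θ b₁ b₂ : LP) : Prop :=
  sqDom Θ * hstar a * a + hstar b₁ * b₁ - hstar b₂ * b₂ = Θ ∧
  sqDom Θ * hstar a * negSub a + hstar b₁ * negSub b₁ - hstar b₂ * negSub b₂ = 0

/-- The matrix `N_{a,Θ|n_b}` built from the quotients `A`, `B`. -/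
def Nmat (A B : LP) : Matrix (Fin 2) (Fin 2) LP :=
  LaurentPolynomial.C (2 : ℂ)⁻¹ •
    !![cosetL A 0 + cosetL B 0, cosetL A 1 - cosetL B 1;
       T 1 * (cosetL A 1 + cosetL B 1), cosetL A 0 - cosetL B 0]

/-!
`ℂ[z, z⁻¹]` is a localization of `ℂ[z]`, hence a principal ideal domain, and `z ↦ z⁻¹` is a ring
involution under which a Laurent polynomial with symmetry is a monomial multiple of itself. So for
`a`, `b` with symmetry the Bézout gcd `g` is associated to its own inversion, hence has symmetry,
and averaging any Bézout coefficients with their mirror images gives coefficients with symmetry.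
A unimodular row operation whose first row is such a pair replaces the corner entry by a proper
divisor; as strict divisibility is well founded, after finitely many row and column steps the
corner divides its row and column, and elimination diagonalizes. Every transformation carries
symmetry types matching those of the rows and columns it acts on.

Unimodular transformations preserve the common divisors of all entries, which for `diag(d₁, d₂)`
with `d₁ ∣ d₂` are the divisors of `d₁`, and preserve the determinant up to a unit. Hence
`min(m₁, m₂) = n₁` and `m₁ + m₂ = n₁ + n₂`.
-/

end QT

theorem IsLocalization.isPrincipalIdealRing {R S : Type*} [CommRing R] [CommRing S] [Algebra R S]
    (M : Submonoid R) [IsLocalization M S] [IsPrincipalIdealRing R] : IsPrincipalIdealRing S where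
  principal J := by
    rw [← IsLocalization.map_under M S J,
      ← Ideal.span_singleton_generator (J.under R), Ideal.map_span,
      Set.image_singleton]
    exact ⟨_, rfl⟩

theorem IsLocalization.prime_algebraMap {R S : Type*} [CommRing R] [CommRing S] [Algebra R S]
    (M : Submonoid R) [IsLocalization M S] {p : R} (hp : Prime p) (hM : ∀ m ∈ M, ¬ p ∣ m)
    (hp0 : algebraMap R S p ≠ 0) : Prime (algebraMap R S p) := by
  rw [← Ideal.span_singleton_prime hp0, ← Set.image_singleton, ← Ideal.map_span]
  refine IsLocalization.isPrime_of_isPrime_disjoint M S _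
    ((Ideal.span_singleton_prime hp.ne_zero).2 hp) ?_
  rw [Set.disjoint_left]
  intro m hm hpm
  exact hM m hm (Ideal.mem_span_singleton.1 hpm)

namespace LaurentPolynomial

variable {K : Type*} [Field K]

instance : IsPrincipalIdealRing K[T;T⁻¹] :=
  IsLocalization.isPrincipalIdealRing (Submonoid.powers (Polynomial.X : Polynomial K))

theorem prime_T_sub_C {a : K} (ha : a ≠ 0) : Prime (T 1 - C a : K[T;T⁻¹]) := by
  have h : (T 1 - C a : K[T;T⁻¹]) =
      algebraMap (Polynomial K) K[T;T⁻¹] (Polynomial.X - Polynomial.C a) := by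
    simp [algebraMap_eq_toLaurent]
  rw [h]
  refine IsLocalization.prime_algebraMap (Submonoid.powers Polynomial.X)
    (Polynomial.prime_X_sub_C a) ?_ ?_
  · rintro _ ⟨n, rfl⟩ hdvd
    simp [Polynomial.dvd_iff_isRoot, ha] at hdvd
  · rw [algebraMap_eq_toLaurent, Polynomial.toLaurent_ne_zero]
    exact Polynomial.X_sub_C_ne_zero a

theorem isUnit_iff {u : K[T;T⁻¹]} : IsUnit u ↔ ∃ a ≠ 0, ∃ n, u = C a * T n := by
  refine ⟨fun hu => ?_, ?_⟩
  · obtain ⟨v, huv⟩ := isUnit_iff_exists_inv.1 hu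
    obtain ⟨m, p, hp⟩ := exists_T_pow u
    obtain ⟨m', q, hq⟩ := exists_T_pow v
    have hpq : p * q = Polynomial.X ^ (m + m') := by
      apply Polynomial.toLaurent_injective
      rw [map_mul, hp, hq, Polynomial.toLaurent_X_pow, Nat.cast_add, T_add,
        mul_mul_mul_comm, huv, one_mul]
    obtain ⟨i, -, hi⟩ := (dvd_prime_pow Polynomial.prime_X _).1 (Dvd.intro q hpq)
    obtain ⟨w, hw⟩ := hi.symm
    obtain ⟨a, ha, haw⟩ := Polynomial.isUnit_iff.1 w.isUnit
    refine ⟨a, ha.ne_zero, i - m, ?_⟩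
    have := congrArg Polynomial.toLaurent hw
    rw [map_mul, Polynomial.toLaurent_X_pow, ← haw, Polynomial.toLaurent_C, hp] at this
    rw [T_sub, ← mul_assoc, mul_comm (C a), this, mul_T_assoc, add_neg_cancel, T_zero, mul_one]
  · rintro ⟨a, ha, n, rfl⟩
    exact ((Ne.isUnit ha).map C).mul (isUnit_T n)

end LaurentPolynomial

namespace Matrix

variable {n R : Type*} [CommRing R]

theorem dvd_mul_mul_apply [Fintype n] {a : R} {N : Matrix n n R} (h : ∀ i j, a ∣ N i j)
    (U V : Matrix n n R) (i j : n) : a ∣ (U * N * V) i j := by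
  simp only [mul_apply]
  exact Finset.dvd_sum fun k _ => (Finset.dvd_sum fun l _ => (h l k).mul_left _).mul_right _

theorem forall_dvd_iff_of_eq_mul_mul [Fintype n] [DecidableEq n] {a : R} {M N U V : Matrix n n R}
    (hU : IsUnit U.det) (hV : IsUnit V.det) (h : M = U * N * V) :
    (∀ i j, a ∣ M i j) ↔ ∀ i j, a ∣ N i j := by
  refine ⟨fun hM => ?_, fun hN => h ▸ dvd_mul_mul_apply hN U V⟩
  have hN : N = U⁻¹ * M * V⁻¹ := by
    rw [h]
    simp only [← Matrix.mul_assoc, nonsing_inv_mul U hU, Matrix.one_mul]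
    rw [Matrix.mul_assoc, mul_nonsing_inv V hV, Matrix.mul_one]
  exact hN ▸ dvd_mul_mul_apply hM _ _

theorem forall_dvd_diagonal_iff [DecidableEq n] {a : R} {d : n → R} :
    (∀ i j, a ∣ diagonal d i j) ↔ ∀ i, a ∣ d i := by
  refine ⟨fun h i => by simpa using h i i, fun h i j => ?_⟩
  by_cases hij : i = j
  · subst hij
    simpa using h i
  · simp [diagonal_apply_ne _ hij]

theorem isUnit_det_permMatrix [Fintype n] [DecidableEq n] (σ : Equiv.Perm n) :
    IsUnit (σ.permMatrix R).det := by
  rw [det_permutation]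
  exact (Equiv.Perm.sign σ).isUnit.map (Int.castRingHom R)

theorem IsDiag.eq_diagonal_fin_two {α : Type*} [Zero α] {M : Matrix (Fin 2) (Fin 2) α}
    (h : M.IsDiag) : M = diagonal ![M 0 0, M 1 1] := by
  conv_lhs => rw [← h.diagonal_diag]
  congr 1
  ext i
  fin_cases i <;> rfl

variable {p e₁ e₂ d₁ d₂ : R} {U V : Matrix (Fin 2) (Fin 2) R}

theorem min_emultiplicity_eq_of_diagonal_eq (hU : IsUnit U.det) (hV : IsUnit V.det)
    (hd : d₁ ∣ d₂) (h : diagonal ![e₁, e₂] = U * diagonal ![d₁, d₂] * V) :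
    min (emultiplicity p e₁) (emultiplicity p e₂) = emultiplicity p d₁ := by
  refine ENat.eq_of_forall_natCast_le_iff fun k => ?_
  have := forall_dvd_iff_of_eq_mul_mul (a := p ^ k) hU hV h
  rw [forall_dvd_diagonal_iff, forall_dvd_diagonal_iff] at this
  simp only [Fin.forall_fin_two, cons_val_zero, cons_val_one] at this
  rw [le_min_iff, ← pow_dvd_iff_le_emultiplicity, ← pow_dvd_iff_le_emultiplicity,
    ← pow_dvd_iff_le_emultiplicity, this]
  exact ⟨And.left, fun h => ⟨h, h.trans hd⟩⟩

theorem emultiplicity_add_eq_of_diagonal_eq [IsDomain R] (hp : Prime p) (hU : IsUnit U.det)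
    (hV : IsUnit V.det) (h : diagonal ![e₁, e₂] = U * diagonal ![d₁, d₂] * V) :
    emultiplicity p e₁ + emultiplicity p e₂ = emultiplicity p d₁ + emultiplicity p d₂ := by
  have hdet := congrArg det h
  simp only [det_mul, det_diagonal, Fin.prod_univ_two, cons_val_zero, cons_val_one] at hdet
  rw [← emultiplicity_mul hp, ← emultiplicity_mul hp]
  refine emultiplicity_eq_of_associated_right (Associated.symm ⟨(hU.mul hV).unit, ?_⟩)
  rw [IsUnit.unit_spec, hdet]
  ring

end Matrix

namespace QT

open LaurentPolynomial

variable {u v w a b : LP} {ε ε' : ℂ} {c c' : ℤ}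

theorem Sgn.mul_self (h : Sgn ε) : ε * ε = 1 := by
  rcases h with rfl | rfl <;> norm_num

theorem Sgn.mul (h : Sgn ε) (h' : Sgn ε') : Sgn (ε * ε') := by
  rcases h with rfl | rfl <;> rcases h' with rfl | rfl <;> norm_num [Sgn]

theorem symT_iff : SymT u ε c ↔ u = C ε * T c * invert u := by
  have key : ∀ k, (C ε * T c * invert u).coeff k = ε * coeff u (c - k) := fun k => by
    rw [← single_eq_C_mul_T, AddMonoidAlgebra.coeff_single_mul_apply, invert_apply]
    simp [coeff, neg_add_eq_sub]
  constructor
  · intro h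
    ext k
    exact (h k).trans (key k).symm
  · intro h k
    rw [← key]
    exact congrArg (fun f : LP => f.coeff k) h

theorem symT_zero (ε : ℂ) (c : ℤ) : SymT 0 ε c := fun _ => by simp [coeff]

theorem symT_one : SymT 1 1 0 := symT_iff.2 (by simp)

theorem Sgn.symT_one (h : Sgn ε) (c : ℤ) : SymT 1 (ε * ε) (c - c) := by
  rw [h.mul_self, sub_self]
  exact QT.symT_one

theorem SymT.add (hu : SymT u ε c) (hv : SymT v ε c) : SymT (u + v) ε c := fun k => by
  have := hu k; have := hv k; simp_all [coeff, mul_add]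

theorem SymT.neg (hu : SymT u ε c) : SymT (-u) ε c := fun k => by
  have := hu k; simp_all [coeff]

theorem SymT.mul (hu : SymT u ε c) (hv : SymT v ε' c') : SymT (u * v) (ε * ε') (c + c') := by
  rw [symT_iff] at *
  conv_lhs => rw [hu, hv]
  rw [map_mul, map_mul, T_add]
  ring

theorem SymT.invert_eq (hu : SymT u ε c) (hε : ε * ε = 1) : invert u = C ε * T (-c) * u := by
  conv_rhs => rw [symT_iff.1 hu]
  rw [← mul_assoc, mul_mul_mul_comm, ← map_mul, hε, ← T_add, neg_add_cancel, T_zero, map_one,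
    one_mul, one_mul]

theorem SymT.mul_self_eq_one (hu : SymT u ε c) (hu0 : u ≠ 0) : ε * ε = 1 := by
  have h := symT_iff.1 hu
  have h' := congrArg invert h
  rw [map_mul, map_mul, invert_C, invert_T, involutive_invert u] at h'
  have : u = C (ε * ε) * u := by
    conv_lhs => rw [h, h']
    rw [map_mul, ← mul_assoc, mul_mul_mul_comm (C ε), ← T_add, add_neg_cancel, T_zero, mul_one]
  have : C (ε * ε) = 1 := mul_right_cancel₀ hu0 (this.symm.trans (one_mul u).symm)
  rw [← map_one C] at this
  simpa only [C_apply, if_true] using congrArg (fun f : LP => f.coeff 0) this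

theorem SymT.of_mul_left (h : SymT (v * w) ε c) (hv : SymT v ε' c') (hv0 : v ≠ 0) :
    SymT w (ε * ε') (c - c') := by
  have hε' := hv.mul_self_eq_one hv0
  rw [symT_iff] at h ⊢
  apply mul_left_cancel₀ hv0
  conv_lhs => rw [h]
  rw [map_mul, hv.invert_eq hε', map_mul, T_sub]
  ring

theorem SymT.invert_dvd (hu : SymT u ε c) : invert u ∣ u :=
  ⟨C ε * T c, by rw [mul_comm]; exact symT_iff.1 hu⟩

theorem exists_symT_of_associated_invert (h : Associated (invert u) u) :
    ∃ ε c, Sgn ε ∧ SymT u ε c := by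
  by_cases hu0 : u = 0
  · exact ⟨1, 0, Or.inl rfl, hu0 ▸ symT_zero 1 0⟩
  obtain ⟨μ, hμ⟩ := h
  obtain ⟨l, -, k, hl⟩ := LaurentPolynomial.isUnit_iff.1 μ.isUnit
  have hu : SymT u l k := symT_iff.2 (by conv_lhs => rw [← hμ, hl, mul_comm])
  exact ⟨l, k, mul_self_eq_one_iff.1 (hu.mul_self_eq_one hu0), hu⟩

def symmetrize (ε : ℂ) (c : ℤ) (u : LP) : LP := (2⁻¹ : ℂ) • (u + C ε * T c * invert u)

theorem symT_symmetrize (hε : ε * ε = 1) (u : LP) : SymT (symmetrize ε c u) ε c := by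
  rw [symT_iff, symmetrize, map_smul, map_add, map_mul, map_mul, invert_C, invert_T,
    involutive_invert u, mul_smul_comm, mul_add, ← mul_assoc, mul_mul_mul_comm (C ε),
    ← map_mul, hε, ← T_add, add_neg_cancel, T_zero, map_one, one_mul, one_mul, add_comm]

theorem symmetrize_of_symT (hu : SymT u ε c) : symmetrize ε c u = u := by
  rw [symmetrize, ← symT_iff.1 hu, ← two_smul ℂ u, smul_smul]
  norm_num

theorem symmetrize_add (u v : LP) :
    symmetrize ε c (u + v) = symmetrize ε c u + symmetrize ε c v := by
  simp only [symmetrize, map_add, mul_add, ← smul_add]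
  congr 1
  abel

theorem symmetrize_mul (ha : SymT a ε' c') (u : LP) :
    symmetrize ε c u * a = symmetrize (ε * ε') (c + c') (u * a) := by
  rw [symT_iff] at ha
  simp only [symmetrize, smul_mul_assoc, add_mul, map_mul, T_add]
  congr 2
  nth_rewrite 1 [ha]
  ring

theorem exists_symT_bezout {εa εb : ℂ} {ca cb : ℤ} (hεa : Sgn εa) (hεb : Sgn εb)
    (ha : SymT a εa ca) (hb : SymT b εb cb) :
    ∃ g εg cg, Sgn εg ∧ SymT g εg cg ∧ g ∣ a ∧ g ∣ b ∧
      ∃ u v, SymT u (εg * εa) (cg - ca) ∧ SymT v (εg * εb) (cg - cb) ∧ u * a + v * b = g := by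
  set g := IsBezout.gcd a b
  have hga : g ∣ a := IsBezout.gcd_dvd_left a b
  have hgb : g ∣ b := IsBezout.gcd_dvd_right a b
  have hinv : invert g ∣ g := IsBezout.dvd_gcd
    ((map_dvd invert hga).trans ha.invert_dvd) ((map_dvd invert hgb).trans hb.invert_dvd)
  have hg_dvd : g ∣ invert g := by
    simpa only [involutive_invert g] using map_dvd invert hinv
  obtain ⟨εg, cg, hεg, hg⟩ := exists_symT_of_associated_invert (associated_of_dvd_dvd hinv hg_dvd)
  obtain ⟨u₀, v₀, hbez⟩ := IsBezout.gcd_eq_sum a b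
  refine ⟨g, εg, cg, hεg, hg, hga, hgb, _, _, symT_symmetrize (hεg.mul hεa).mul_self u₀,
    symT_symmetrize (hεg.mul hεb).mul_self v₀, ?_⟩
  rw [symmetrize_mul ha, symmetrize_mul hb, mul_assoc, hεa.mul_self, mul_assoc, hεb.mul_self,
    mul_one, sub_add_cancel, sub_add_cancel, ← symmetrize_add, hbez, symmetrize_of_symT hg]

section CompatSymWith

variable {l m n : Type*}

def CompatSymWith (ε : m → ℂ) (c : m → ℤ) (ε' : n → ℂ) (c' : n → ℤ) (A : Matrix m n LP) :
    Prop :=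
  ∀ j k, SymT (A j k) (ε j * ε' k) (c' k - c j)

variable {θ : l → ℂ} {r : l → ℤ} {ε : m → ℂ} {c : m → ℤ} {ε' : n → ℂ} {c' : n → ℤ}

theorem CompatSymWith.mul [Fintype m] {P : Matrix l m LP} {A : Matrix m n LP}
    (hε : ∀ k, Sgn (ε k)) (hP : CompatSymWith θ r ε c P) (hA : CompatSymWith ε c ε' c' A) :
    CompatSymWith θ r ε' c' (P * A) := fun j i => by
  rw [Matrix.mul_apply]
  refine Finset.sum_induction _ (SymT · _ _) (fun _ _ => SymT.add) (symT_zero _ _) fun k _ => ?_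
  convert (hP j k).mul (hA k i) using 1
  · linear_combination (-(θ j * ε' i)) * (hε k).mul_self
  · ring

theorem CompatSymWith.transpose {A : Matrix m n LP} (h : CompatSymWith ε c ε' c' A) :
    CompatSymWith ε' (-c') ε (-c) Aᵀ := fun k j => by
  have hc : c' k - c j = (-c) j - (-c') k := by simp only [Pi.neg_apply]; ring
  simpa only [transpose_apply, mul_comm, hc] using h j k

theorem compatSymWith_permMatrix [DecidableEq m] (σ : Equiv.Perm m) (hε : ∀ j, Sgn (ε j)) :
    CompatSymWith (ε ∘ σ) (c ∘ σ) ε c (σ.permMatrix LP) := fun i j => by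
  unfold Equiv.Perm.permMatrix
  rw [PEquiv.toMatrix_apply, Equiv.toPEquiv_apply]
  split_ifs with h
  · obtain rfl : σ i = j := Option.some_inj.1 h
    exact (hε _).symT_one _
  · exact symT_zero _ _

theorem compatSymWith_one [DecidableEq m] (hε : ∀ j, Sgn (ε j)) :
    CompatSymWith ε c ε c (1 : Matrix m m LP) := by
  simpa using compatSymWith_permMatrix (c := c) 1 hε

end CompatSymWith

section SymDiagonalizable

variable {n : Type*} [Fintype n] [DecidableEq n]

def SymDiagonalizable (ε : n → ℂ) (c : n → ℤ) (ε' : n → ℂ) (c' : n → ℤ) (B : Matrix n n LP) :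
    Prop :=
  ∃ (P Q : Matrix n n LP) (θ : n → ℂ) (r : n → ℤ) (θ' : n → ℂ) (r' : n → ℤ),
    (∀ j, Sgn (θ j)) ∧ (∀ k, Sgn (θ' k)) ∧ CompatSymWith θ r ε c P ∧
    CompatSymWith ε' c' θ' r' Q ∧ IsUnit P.det ∧ IsUnit Q.det ∧ (P * B * Q).IsDiag

variable {ε ε' θ : n → ℂ} {c c' r : n → ℤ} {B P : Matrix n n LP}

theorem SymDiagonalizable.of_isDiag (hε : ∀ j, Sgn (ε j)) (hε' : ∀ k, Sgn (ε' k))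
    (hB : B.IsDiag) : SymDiagonalizable ε c ε' c' B :=
  ⟨1, 1, ε, c, ε', c', hε, hε', compatSymWith_one hε, compatSymWith_one hε', by simp, by simp,
    by simpa using hB⟩

theorem SymDiagonalizable.of_mul_left (hθ : ∀ j, Sgn (θ j)) (hP : CompatSymWith θ r ε c P)
    (hPu : IsUnit P.det) (h : SymDiagonalizable θ r ε' c' (P * B)) :
    SymDiagonalizable ε c ε' c' B := by
  obtain ⟨P', Q, η, s, η', s', hη, hη', hP', hQ, hP'u, hQu, hD⟩ := h
  refine ⟨P' * P, Q, η, s, η', s', hη, hη', hP'.mul hθ hP, hQ, ?_, hQu, ?_⟩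
  · rw [det_mul]
    exact hP'u.mul hPu
  · rwa [Matrix.mul_assoc P']

theorem SymDiagonalizable.of_transpose (h : SymDiagonalizable ε' (-c') ε (-c) Bᵀ) :
    SymDiagonalizable ε c ε' c' B := by
  obtain ⟨P, Q, θ, r, θ', r', hθ, hθ', hP, hQ, hPu, hQu, hD⟩ := h
  refine ⟨Qᵀ, Pᵀ, θ', -r', θ, -r, hθ', hθ, ?_, ?_, by rwa [det_transpose],
    by rwa [det_transpose], ?_⟩
  · simpa using hQ.transpose
  · simpa using hP.transpose
  · simpa [Matrix.transpose_mul, Matrix.mul_assoc] using hD.transpose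

end SymDiagonalizable

section FinTwo

variable {ε ε' : Fin 2 → ℂ} {c c' : Fin 2 → ℤ} {B : Matrix (Fin 2) (Fin 2) LP}

theorem exists_row_elimination (hε : ∀ j, Sgn (ε j)) (hε' : ∀ k, Sgn (ε' k))
    (hB : CompatSymWith ε c ε' c' B) (hx : B 0 0 ≠ 0) (hdvd : B 0 0 ∣ B 1 0) :
    ∃ P : Matrix (Fin 2) (Fin 2) LP, CompatSymWith ε c ε c P ∧ IsUnit P.det ∧
      (P * B) 0 = B 0 ∧ (P * B) 1 0 = 0 := by
  obtain ⟨w, hw⟩ := hdvd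
  have hw' : SymT w (ε 1 * ε 0) (c 0 - c 1) := by
    convert (hw ▸ hB 1 0).of_mul_left (hB 0 0) hx using 1
    · linear_combination (-(ε 1 * ε 0)) * (hε' 0).mul_self
    · ring
  refine ⟨!![1, 0; -w, 1], ?_, by simp [det_fin_two], ?_, by simp [mul_apply, hw]; ring⟩
  · intro j k
    fin_cases j <;> fin_cases k
    · simpa using (hε 0).symT_one (c 0)
    · simpa using symT_zero (ε 0 * ε 1) (c 1 - c 0)
    · simpa using hw'.neg
    · simpa using (hε 1).symT_one (c 1)
  · ext k
    simp [mul_apply]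

theorem exists_row_reduction (hε : ∀ j, Sgn (ε j)) (hε' : ∀ k, Sgn (ε' k))
    (hB : CompatSymWith ε c ε' c' B) (hx : B 0 0 ≠ 0) (hndvd : ¬ B 0 0 ∣ B 1 0) :
    ∃ (P : Matrix (Fin 2) (Fin 2) LP) (θ : Fin 2 → ℂ) (r : Fin 2 → ℤ), (∀ j, Sgn (θ j)) ∧
      CompatSymWith θ r ε c P ∧ IsUnit P.det ∧ DvdNotUnit ((P * B) 0 0) (B 0 0) := by
  obtain ⟨g, εg, cg, hεg, hg, ⟨wx, hwx⟩, ⟨wb, hwb⟩, u, v, hu, hv, hbez⟩ :=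
    exists_symT_bezout ((hε 0).mul (hε' 0)) ((hε 1).mul (hε' 0)) (hB 0 0) (hB 1 0)
  have hg0 : g ≠ 0 := by
    rintro rfl
    exact hx (by simpa using hwx)
  have hwx' := (hwx ▸ hB 0 0).of_mul_left hg hg0
  have hwb' := (hwb ▸ hB 1 0).of_mul_left hg hg0
  have hPB : (!![u, v; -wb, wx] * B) 0 0 = g := by simpa [mul_apply] using hbez
  have hdet : u * wx + v * wb = 1 := by
    apply mul_left_cancel₀ hg0
    linear_combination hbez - u * hwx - v * hwb
  refine ⟨!![u, v; -wb, wx], ![εg * ε' 0, ε 0 * ε 1 * ε' 0 * εg],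
    ![c' 0 - cg, c 0 + c 1 - c' 0 + cg], ?_, ?_, ?_, ?_⟩
  · intro j
    fin_cases j
    · exact hεg.mul (hε' 0)
    · exact (((hε 0).mul (hε 1)).mul (hε' 0)).mul hεg
  · intro j k
    fin_cases j <;> fin_cases k
    · convert hu using 1 <;> simp <;> ring
    · convert hv using 1 <;> simp <;> ring
    · convert hwb'.neg using 1 <;> simp
      · linear_combination (ε 1 * ε' 0 * εg) * (hε 0).mul_self
      · ring
    · convert hwx' using 1 <;> simp
      · linear_combination (ε 0 * ε' 0 * εg) * (hε 1).mul_self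
      · ring
  · rw [det_fin_two_of, mul_neg, sub_neg_eq_add, hdet]
    exact isUnit_one
  · rw [hPB]
    refine dvdNotUnit_of_dvd_of_not_dvd ⟨wx, hwx⟩ fun hxg => hndvd (hxg.trans ⟨wb, hwb⟩)

theorem symDiagonalizable_of_corner_dvd (hε : ∀ j, Sgn (ε j)) (hε' : ∀ k, Sgn (ε' k))
    (hB : CompatSymWith ε c ε' c' B) (hx : B 0 0 ≠ 0) (h10 : B 0 0 ∣ B 1 0)
    (h01 : B 0 0 ∣ B 0 1) : SymDiagonalizable ε c ε' c' B := by
  -- clear the entry below the corner, transpose, and clear it again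
  obtain ⟨P, hP, hPu, hrow, hP10⟩ := exists_row_elimination hε hε' hB hx h10
  have hrow' : ∀ k, (P * B) 0 k = B 0 k := fun k => congrFun hrow k
  obtain ⟨P', hP', hP'u, hrow₂, hP'10⟩ := exists_row_elimination hε' hε
    (hP.mul hε hB).transpose (by simpa [hrow'] using hx) (by simpa [hrow'] using h01)
  refine .of_mul_left hε hP hPu (.of_transpose (.of_mul_left hε' hP' hP'u (.of_isDiag hε' hε ?_)))
  intro i j hij
  fin_cases i <;> fin_cases j
  · exact absurd rfl hij
  · simpa [hP10] using congrFun hrow₂ 1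
  · exact hP'10
  · exact absurd rfl hij

theorem symDiagonalizable_of_corner_ne_zero (hε : ∀ j, Sgn (ε j)) (hε' : ∀ k, Sgn (ε' k))
    (hB : CompatSymWith ε c ε' c' B) (hx : B 0 0 ≠ 0) : SymDiagonalizable ε c ε' c' B := by
  induction hB00 : B 0 0 using (wellFounded_dvdNotUnit (α := LP)).induction
    generalizing ε c ε' c' B with
  | h x ih =>
  subst hB00
  have reduce : ∀ {η : Fin 2 → ℂ} {s : Fin 2 → ℤ} {η' : Fin 2 → ℂ} {s' : Fin 2 → ℤ}
      {B' : Matrix (Fin 2) (Fin 2) LP}, (∀ j, Sgn (η j)) → (∀ k, Sgn (η' k)) →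
      CompatSymWith η s η' s' B' → B' 0 0 = B 0 0 → ¬ B 0 0 ∣ B' 1 0 →
      SymDiagonalizable η s η' s' B' := by
    intro η s η' s' B' hη hη' hB' hB'00 hndvd
    obtain ⟨P, θ, r, hθ, hP, hPu, hdvd⟩ :=
      exists_row_reduction hη hη' hB' (hB'00 ▸ hx) (hB'00 ▸ hndvd)
    rw [hB'00] at hdvd
    exact .of_mul_left hθ hP hPu (ih _ hdvd hθ hη' (hP.mul hη hB') hdvd.1 rfl)
  by_cases h10 : B 0 0 ∣ B 1 0
  · by_cases h01 : B 0 0 ∣ B 0 1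
    · exact symDiagonalizable_of_corner_dvd hε hε' hB hx h10 h01
    · exact .of_transpose (reduce hε' hε hB.transpose rfl h01)
  · exact reduce hε hε' hB rfl h10

theorem symDiagonalizable (hε : ∀ j, Sgn (ε j)) (hε' : ∀ k, Sgn (ε' k))
    (hB : CompatSymWith ε c ε' c' B) : SymDiagonalizable ε c ε' c' B := by
  by_cases hB0 : B = 0
  · exact .of_isDiag hε hε' (hB0 ▸ isDiag_zero)
  obtain ⟨j, k, hjk⟩ : ∃ j k, B j k ≠ 0 := by
    by_contra! h
    exact hB0 (Matrix.ext h)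
  -- move `B j k` to the corner: swap rows, transpose, swap rows again
  set σ := Equiv.swap 0 j
  set τ := Equiv.swap 0 k
  have hσ := compatSymWith_permMatrix (c := c) σ hε
  have hτ := compatSymWith_permMatrix (c := -c') τ hε'
  have hσB := (hσ.mul hε hB).transpose
  refine .of_mul_left (fun i => hε (σ i)) hσ (isUnit_det_permMatrix σ)
    (.of_transpose (.of_mul_left (fun i => hε' (τ i)) hτ (isUnit_det_permMatrix τ)
      (symDiagonalizable_of_corner_ne_zero (fun i => hε' (τ i)) (fun i => hε (σ i))
        (hτ.mul hε' hσB) ?_)))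
  simpa [PEquiv.toMatrix_toPEquiv_mul, σ, τ] using hjk

end FinTwo

theorem strongInv_iff_isUnit_det {A : Matrix (Fin 2) (Fin 2) LP} : StrongInv A ↔ IsUnit A.det := by
  rw [LaurentPolynomial.isUnit_iff]
  exact ⟨fun ⟨l, k, hl, h⟩ => ⟨l, hl, k, h⟩, fun ⟨l, hl, k, h⟩ => ⟨l, k, hl, h⟩⟩

theorem mzIs_eq_or_eq_swap_of_diagonal_eq {e₁ e₂ d₁ d₂ : LP} {U V : Matrix (Fin 2) (Fin 2) LP}
    (hU : IsUnit U.det) (hV : IsUnit V.det) (hd : d₁ ∣ d₂)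
    (h : diagonal ![e₁, e₂] = U * diagonal ![d₁, d₂] * V) {z₀ : ℂ} (hz₀ : z₀ ≠ 0)
    {m₁ m₂ n₁ n₂ : ℕ} (hm₁ : mzIs e₁ z₀ m₁) (hm₂ : mzIs e₂ z₀ m₂) (hn₁ : mzIs d₁ z₀ n₁)
    (hn₂ : mzIs d₂ z₀ n₂) : (m₁ = n₁ ∧ m₂ = n₂) ∨ (m₁ = n₂ ∧ m₂ = n₁) := by
  have hmin := min_emultiplicity_eq_of_diagonal_eq (p := zsub z₀) hU hV hd h
  have hsum := emultiplicity_add_eq_of_diagonal_eq (p := zsub z₀) (prime_T_sub_C hz₀) hU hV h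
  simp only [emultiplicity_eq_coe.2 hm₁, emultiplicity_eq_coe.2 hm₂, emultiplicity_eq_coe.2 hn₁,
    emultiplicity_eq_coe.2 hn₂] at hmin hsum
  rw [← Nat.mono_cast.map_min, Nat.cast_inj] at hmin
  norm_cast at hsum
  omega

/-- normal form with compatible symmetry (Theorem 3.10 of the paper). -/
theorem normal_form_with_compatible_symmetry
    (A : Matrix (Fin 2) (Fin 2) LP) (hA : CompatSym A) :
    ∃ (P Q : Matrix (Fin 2) (Fin 2) LP) (e₁ e₂ : LP),
      StrongInv P ∧ StrongInv Q ∧ CompatSym P ∧ CompatSym Q ∧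
      HasSym e₁ ∧ HasSym e₂ ∧
      P * A * Q = Matrix.diagonal ![e₁, e₂] ∧
      (A.det ≠ 0 →
        ∀ (E F : Matrix (Fin 2) (Fin 2) LP) (d₁ d₂ : LP),
          StrongInv E → StrongInv F → d₁ ∣ d₂ →
          A = E * Matrix.diagonal ![d₁, d₂] * F →
          ∀ z₀ : ℂ, z₀ ≠ 0 →
            ∀ m₁ m₂ n₁ n₂ : ℕ,
              mzIs e₁ z₀ m₁ → mzIs e₂ z₀ m₂ → mzIs d₁ z₀ n₁ → mzIs d₂ z₀ n₂ →
              ((m₁ = n₁ ∧ m₂ = n₂) ∨ (m₁ = n₂ ∧ m₂ = n₁))) := by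
  obtain ⟨ε, ε', c, c', hε, hε', hA⟩ := hA
  obtain ⟨P, Q, θ, r, θ', r', hθ, hθ', hP, hQ, hPu, hQu, hD⟩ := symDiagonalizable hε hε' hA
  have hPAQ := (hP.mul hε hA).mul hε' hQ
  refine ⟨P, Q, _, _, strongInv_iff_isUnit_det.2 hPu, strongInv_iff_isUnit_det.2 hQu,
    ⟨θ, ε, r, c, hθ, hε, hP⟩, ⟨ε', θ', c', r', hε', hθ', hQ⟩,
    ⟨_, _, (hθ 0).mul (hθ' 0), hPAQ 0 0⟩, ⟨_, _, (hθ 1).mul (hθ' 1), hPAQ 1 1⟩,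
    hD.eq_diagonal_fin_two, ?_⟩
  intro _ E F d₁ d₂ hE hF hd hAEF z₀ hz₀ m₁ m₂ n₁ n₂
  refine mzIs_eq_or_eq_swap_of_diagonal_eq (U := P * E) (V := F * Q) ?_ ?_ hd ?_ hz₀
  · rw [det_mul]
    exact hPu.mul (strongInv_iff_isUnit_det.1 hE)
  · rw [det_mul]
    exact (strongInv_iff_isUnit_det.1 hF).mul hQu
  · rw [← hD.eq_diagonal_fin_two, hAEF]
    simp only [Matrix.mul_assoc]

end QT
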